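/- arXiv:2409.09017 — 2 statements merged into one kernel-verified Lean document; each statement's English description precedes it below -/
import Mathlib

section
/- Let h(λ, μ, φ, ρ) and h(λ′, μ′, φ, ρ) be two Lie algebras on h ⊕ a ⊕ i constructed from the same Lie algebra (h, [·,·]_h), representation ρ : h → gl(i), and 1-cocycle φ : h → Hom(a, i), with 2-cocycles (λ, μ) and (λ′, μ′) respectively. Suppose there exist linear maps L : h → a and M : h → i such that λ′(x,y) = λ(x,y) − L([x,y]_h) and μ′(x,y) = μ(x,y) + φ(x)(L(y)) − φ(y)(L(x)) + ρ(x)(M(y)) − ρ(y)(M(x)) − M([x,y]_h) for all x, y in h (i.e. (λ′,μ′) = (λ,μ) + d_R(L,M), so they lie in the same cohomology class). Then the linear map Ψ defined by Ψ(x) = x − L(x) − M(x) for x in h and Ψ(u + α) = u + α for u in a, α in i, is an isomorphism of Lie algebras from h(λ, μ, φ, ρ) to h(λ′, μ′, φ, ρ) which restricts to the identity on a and on i. -/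
section

variable {F h a i : Type*} [CommRing F] [LieRing h] [LieAlgebra F h]
  [AddCommGroup a] [Module F a] [AddCommGroup i] [Module F i]

/-- The bracket of `h(λ, μ, φ, ρ)`, with `h ⊕ a ⊕ i` modelled as `h × a × i`. -/
def extensionBracket (ρ : h →ₗ[F] i →ₗ[F] i) (φ : h →ₗ[F] a →ₗ[F] i)
    (la : h →ₗ[F] h →ₗ[F] a) (mu : h →ₗ[F] h →ₗ[F] i) (p q : h × a × i) : h × a × i :=
  (⁅p.1, q.1⁆, la p.1 q.1,
    mu p.1 q.1 + φ p.1 q.2.1 - φ q.1 p.2.1 + ρ p.1 q.2.2 - ρ q.1 p.2.2)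

def shearEquiv (L : h →ₗ[F] a) (M : h →ₗ[F] i) : (h × a × i) ≃ₗ[F] h × a × i :=
  (LinearEquiv.refl F h).skewProd (LinearEquiv.refl F (a × i)) (-L.prod M)

theorem shearEquiv_apply (L : h →ₗ[F] a) (M : h →ₗ[F] i) (p : h × a × i) :
    shearEquiv L M p = (p.1, p.2.1 - L p.1, p.2.2 - M p.1) := by
  simp [shearEquiv, LinearEquiv.skewProd_apply, Prod.ext_iff, sub_eq_add_neg]

theorem shearEquiv_extensionBracket (ρ : h →ₗ[F] i →ₗ[F] i) (φ : h →ₗ[F] a →ₗ[F] i)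
    (la la' : h →ₗ[F] h →ₗ[F] a) (mu mu' : h →ₗ[F] h →ₗ[F] i)
    (L : h →ₗ[F] a) (M : h →ₗ[F] i)
    (hla' : ∀ x y : h, la' x y = la x y - L ⁅x, y⁆)
    (hmu' : ∀ x y : h, mu' x y =
      mu x y + φ x (L y) - φ y (L x) + ρ x (M y) - ρ y (M x) - M ⁅x, y⁆)
    (p q : h × a × i) :
    shearEquiv L M (extensionBracket ρ φ la mu p q) =
      extensionBracket ρ φ la' mu' (shearEquiv L M p) (shearEquiv L M q) := by
  simp only [shearEquiv_apply, extensionBracket, hla', hmu', map_sub, Prod.mk.injEq, true_and]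
  abel

end

theorem stmt3_general (F : Type*) [Field F]
    (h : Type*) [LieRing h] [LieAlgebra F h]
    (a : Type*) [AddCommGroup a] [Module F a]
    (i : Type*) [AddCommGroup i] [Module F i]
    (ρ : h →ₗ[F] i →ₗ[F] i)
    (φ : h →ₗ[F] a →ₗ[F] i)
    (la la' : h →ₗ[F] h →ₗ[F] a)
    (mu mu' : h →ₗ[F] h →ₗ[F] i)
    -- `(λ′, μ′) = (λ, μ) + d_R(L, M)` for linear maps `L : h → a`, `M : h → i`
    (L : h →ₗ[F] a) (M : h →ₗ[F] i)
    (hla' : ∀ x y : h, la' x y = la x y - L ⁅x, y⁆)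
    (hmu' : ∀ x y : h, mu' x y =
      mu x y + φ x (L y) - φ y (L x) + ρ x (M y) - ρ y (M x) - M ⁅x, y⁆) :
    -- brackets of `h(λ, μ, φ, ρ)` and `h(λ′, μ′, φ, ρ)` on `h ⊕ a ⊕ i`
    let br : h × a × i → h × a × i → h × a × i :=
      fun p q => (⁅p.1, q.1⁆, la p.1 q.1,
        mu p.1 q.1 + φ p.1 q.2.1 - φ q.1 p.2.1 + ρ p.1 q.2.2 - ρ q.1 p.2.2)
    let br' : h × a × i → h × a × i → h × a × i :=
      fun p q => (⁅p.1, q.1⁆, la' p.1 q.1,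
        mu' p.1 q.1 + φ p.1 q.2.1 - φ q.1 p.2.1 + ρ p.1 q.2.2 - ρ q.1 p.2.2)
    let Ψ : h × a × i → h × a × i :=
      fun p => (p.1, p.2.1 - L p.1, p.2.2 - M p.1)
    -- `Ψ` is linear, bijective, bracket-preserving, and the identity on `a` and `i`
    (∀ p q : h × a × i, Ψ (p + q) = Ψ p + Ψ q) ∧
    (∀ (c : F) (p : h × a × i), Ψ (c • p) = c • Ψ p) ∧
    Function.Bijective Ψ ∧
    (∀ p q : h × a × i, Ψ (br p q) = br' (Ψ p) (Ψ q)) ∧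
    (∀ (u : a) (α : i), Ψ (0, u, α) = (0, u, α)) := by
  intro br br' Ψ
  have hΨ : Ψ = shearEquiv L M := funext fun p => (shearEquiv_apply L M p).symm
  rw [hΨ]
  refine ⟨map_add _, map_smul _, (shearEquiv L M).bijective,
    shearEquiv_extensionBracket ρ φ la la' mu mu' L M hla' hmu', fun u α => ?_⟩
  simp [shearEquiv_apply]

/-- if two 2-cocycles `(λ, μ)` and `(λ′, μ′)` differ by the coboundary
`d_R(L, M)`, then `Ψ(x + u + α) = x + (u − L(x)) + (α − M(x))` is an isomorphism of
Lie algebras `h(λ, μ, φ, ρ) → h(λ′, μ′, φ, ρ)` restricting to the identity on `a`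
and on `i`. -/
theorem stmt3 (F : Type*) [Field F] [CharZero F]
    (h : Type*) [LieRing h] [LieAlgebra F h] [FiniteDimensional F h]
    (a : Type*) [AddCommGroup a] [Module F a] [FiniteDimensional F a]
    (i : Type*) [AddCommGroup i] [Module F i] [FiniteDimensional F i]
    (ρ : h →ₗ[F] i →ₗ[F] i)
    (hρ : ∀ x y : h, ρ ⁅x, y⁆ = ρ x ∘ₗ ρ y - ρ y ∘ₗ ρ x)
    (φ : h →ₗ[F] a →ₗ[F] i)
    (hφ : ∀ x y : h, φ ⁅x, y⁆ = ρ x ∘ₗ φ y - ρ y ∘ₗ φ x)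
    (la la' : h →ₗ[F] h →ₗ[F] a) (hla : ∀ x y : h, la x y = - la y x)
    (mu mu' : h →ₗ[F] h →ₗ[F] i) (hmu : ∀ x y : h, mu x y = - mu y x)
    -- `(λ, μ)` is a 2-cocycle
    (hcoc1 : ∀ x y z : h, la ⁅x, y⁆ z + la ⁅y, z⁆ x + la ⁅z, x⁆ y = 0)
    (hcoc2 : ∀ x y z : h,
      φ x (la y z) - φ y (la x z) + φ z (la x y)
        + ρ x (mu y z) - ρ y (mu x z) + ρ z (mu x y)
        - mu ⁅x, y⁆ z + mu ⁅x, z⁆ y - mu ⁅y, z⁆ x = 0)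
    -- `(λ′, μ′) = (λ, μ) + d_R(L, M)` for linear maps `L : h → a`, `M : h → i`
    (L : h →ₗ[F] a) (M : h →ₗ[F] i)
    (hla' : ∀ x y : h, la' x y = la x y - L ⁅x, y⁆)
    (hmu' : ∀ x y : h, mu' x y =
      mu x y + φ x (L y) - φ y (L x) + ρ x (M y) - ρ y (M x) - M ⁅x, y⁆) :
    -- brackets of `h(λ, μ, φ, ρ)` and `h(λ′, μ′, φ, ρ)` on `h ⊕ a ⊕ i`
    let br : h × a × i → h × a × i → h × a × i :=
      fun p q => (⁅p.1, q.1⁆, la p.1 q.1,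
        mu p.1 q.1 + φ p.1 q.2.1 - φ q.1 p.2.1 + ρ p.1 q.2.2 - ρ q.1 p.2.2)
    let br' : h × a × i → h × a × i → h × a × i :=
      fun p q => (⁅p.1, q.1⁆, la' p.1 q.1,
        mu' p.1 q.1 + φ p.1 q.2.1 - φ q.1 p.2.1 + ρ p.1 q.2.2 - ρ q.1 p.2.2)
    let Ψ : h × a × i → h × a × i :=
      fun p => (p.1, p.2.1 - L p.1, p.2.2 - M p.1)
    -- `Ψ` is linear, bijective, bracket-preserving, and the identity on `a` and `i`
    (∀ p q : h × a × i, Ψ (p + q) = Ψ p + Ψ q) ∧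
    (∀ (c : F) (p : h × a × i), Ψ (c • p) = c • Ψ p) ∧
    Function.Bijective Ψ ∧
    (∀ p q : h × a × i, Ψ (br p q) = br' (Ψ p) (Ψ q)) ∧
    (∀ (u : a) (α : i), Ψ (0, u, α) = (0, u, α)) :=
  stmt3_general F h a i ρ φ la la' mu mu' L M hla' hmu'
end

section
/- Let h(λ, μ, φ, ad_h*) be a Lie algebra on h ⊕ a ⊕ h* constructed as an abelian extension (bracket [x,y] = [x,y]_h + λ(x,y) + μ(x,y), [x, u+α] = φ(x)(u) + ad_h*(x)(α), zero bracket on a ⊕ h*), such that μ(x,y)(z) = μ(y,z)(x) for all x, y, z in h. Let B_a be a non-degenerate symmetric bilinear form on a and let λ_φ : h × h → a be the bilinear map determined by φ(x)(u)(y) = −B_a(λ_φ(x,y), u). Suppose there exists a linear map L : h → a such that: (i) φ(x)(L(y)) − φ(y)(L(x)) = 0 for all x, y in h (i.e. e_φ(L) = 0); and (ii) λ_φ(x,y) = λ(x,y) − L([x,y]_h) for all x, y in h (i.e. λ_φ = λ + d_a(L)). Then the Lie algebra h(λ, μ, φ, ad_h*) admits an invariant metric, i.e. a non-degenerate symmetric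 bilinear form B with B([X,Y],Z) = −B(Y,[X,Z]) for all X, Y, Z. -/
/-!
The shear `(x, u, ξ) ↦ (x, u - L x, ξ)` intertwines the bracket of `h(λ, μ, φ, ad_h*)` with that
of `h(λ_φ, μ, φ, ad_h*)`: condition (ii) matches the `a`-components and condition (i) the
`h*`-components. On `h(λ_φ, μ, φ, ad_h*)` the form `ξ(y) + η(x) + B_a(u, v)` is invariant, since
`φ` is the `B_a`-transpose of the skew map `λ_φ` and `μ` is skew and cyclic. Pulling this form
back along the shear gives the invariant metric.
-/

open LieAlgebra

namespace AbelianExtension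

section InvariantMetric

variable {R V W : Type*} [CommRing R] [AddCommGroup V] [Module R V] [AddCommGroup W] [Module R W]

def IsInvariantMetric (B : V →ₗ[R] V →ₗ[R] R) (br : V → V → V) : Prop :=
  (∀ X Y, B X Y = B Y X) ∧ B.SeparatingLeft ∧ ∀ X Y Z, B (br X Y) Z = -B Y (br X Z)

theorem IsInvariantMetric.compl₁₂_equiv {B : W →ₗ[R] W →ₗ[R] R} {brV : V → V → V}
    {brW : W → W → W} (hB : IsInvariantMetric B brW) (e : V ≃ₗ[R] W)
    (he : ∀ X Y, e (brV X Y) = brW (e X) (e Y)) :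
    IsInvariantMetric (B.compl₁₂ (e : V →ₗ[R] W) (e : V →ₗ[R] W)) brV := by
  obtain ⟨hsymm, hsep, hinv⟩ := hB
  refine ⟨fun X Y => hsymm (e X) (e Y), fun X hX => ?_, fun X Y Z => ?_⟩
  · refine e.map_eq_zero_iff.mp (hsep (e X) fun Y => ?_)
    simpa using hX (e.symm Y)
  · simp only [LinearMap.compl₁₂_apply, LinearEquiv.coe_coe, he]
    exact hinv _ _ _

end InvariantMetric

section

variable {R h a : Type*} [CommRing R] [LieRing h] [LieAlgebra R h] [AddCommGroup a] [Module R a]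

def coadjoint (x : h) (ξ : Module.Dual R h) : Module.Dual R h :=
  -(ξ ∘ₗ ad R h x)

def bracket (la : h →ₗ[R] h →ₗ[R] a) (mu : h →ₗ[R] h →ₗ[R] Module.Dual R h)
    (φ : h →ₗ[R] a →ₗ[R] Module.Dual R h) (p q : h × a × Module.Dual R h) :
    h × a × Module.Dual R h :=
  (⁅p.1, q.1⁆, la p.1 q.1,
    mu p.1 q.1 + φ p.1 q.2.1 - φ q.1 p.2.1 + coadjoint p.1 q.2.2 - coadjoint q.1 p.2.2)

def shear (L : h →ₗ[R] a) : (h × a × Module.Dual R h) ≃ₗ[R] (h × a × Module.Dual R h) where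
  toFun X := (X.1, X.2.1 - L X.1, X.2.2)
  invFun X := (X.1, X.2.1 + L X.1, X.2.2)
  map_add' X Y := by
    simp only [Prod.fst_add, Prod.snd_add, map_add, Prod.mk_add_mk]
    congr 2
    abel
  map_smul' c X := by simp [smul_sub]
  left_inv X := by simp
  right_inv X := by simp

theorem shear_bracket {la laφ : h →ₗ[R] h →ₗ[R] a} {mu : h →ₗ[R] h →ₗ[R] Module.Dual R h}
    {φ : h →ₗ[R] a →ₗ[R] Module.Dual R h} {L : h →ₗ[R] a}
    (hL1 : ∀ x y, φ x (L y) - φ y (L x) = 0) (hL2 : ∀ x y, laφ x y = la x y - L ⁅x, y⁆)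
    (X Y : h × a × Module.Dual R h) :
    shear L (bracket la mu φ X Y) = bracket laφ mu φ (shear L X) (shear L Y) := by
  obtain ⟨x, u, ξ⟩ := X
  obtain ⟨y, v, η⟩ := Y
  have hφ : φ x (v - L y) - φ y (u - L x) = φ x v - φ y u := by
    rw [map_sub, map_sub, sub_eq_zero.mp (hL1 x y)]
    abel
  simp only [shear, bracket, LinearEquiv.coe_mk, LinearMap.coe_mk, AddHom.coe_mk, hL2,
    add_sub_assoc, hφ]

def standardForm (Ba : a →ₗ[R] a →ₗ[R] R) :
    (h × a × Module.Dual R h) →ₗ[R] (h × a × Module.Dual R h) →ₗ[R] R :=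
  LinearMap.mk₂ R (fun X Y => X.2.2 Y.1 + Y.2.2 X.1 + Ba X.2.1 Y.2.1)
    (fun _ _ _ => by
      simp only [Prod.fst_add, Prod.snd_add, map_add, LinearMap.add_apply]
      ring)
    (fun _ _ _ => by
      simp only [Prod.smul_fst, Prod.smul_snd, map_smul, LinearMap.smul_apply, smul_eq_mul]
      ring)
    (fun _ _ _ => by
      simp only [Prod.fst_add, Prod.snd_add, map_add, LinearMap.add_apply]
      ring)
    (fun _ _ _ => by
      simp only [Prod.smul_fst, Prod.smul_snd, map_smul, LinearMap.smul_apply, smul_eq_mul]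
      ring)

@[simp]
theorem standardForm_apply (Ba : a →ₗ[R] a →ₗ[R] R) (X Y : h × a × Module.Dual R h) :
    standardForm Ba X Y = X.2.2 Y.1 + Y.2.2 X.1 + Ba X.2.1 Y.2.1 :=
  rfl

theorem isInvariantMetric_standardForm [Module.Projective R h] {Ba : a →ₗ[R] a →ₗ[R] R}
    (hBa_symm : ∀ u v, Ba u v = Ba v u) (hBa_sep : Ba.SeparatingLeft)
    {la : h →ₗ[R] h →ₗ[R] a} (hla : ∀ x y, la x y = -la y x)
    {mu : h →ₗ[R] h →ₗ[R] Module.Dual R h} (hmu : ∀ x y, mu x y = -mu y x)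
    (hmu_cyc : ∀ x y z, mu x y z = mu y z x)
    {φ : h →ₗ[R] a →ₗ[R] Module.Dual R h} (hφ : ∀ x y u, φ x u y = -Ba (la x y) u) :
    IsInvariantMetric (standardForm Ba) (bracket la mu φ) := by
  refine ⟨fun X Y => ?_, fun ⟨x, u, ξ⟩ hX => ?_, fun ⟨x, u, ξ⟩ ⟨y, v, η⟩ ⟨z, w, ζ⟩ => ?_⟩
  · simp only [standardForm_apply, hBa_symm X.2.1]
    ring
  · have hx : x = 0 := (Module.forall_dual_apply_eq_zero_iff R x).mp fun η => by
      simpa using hX (0, 0, η)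
    subst hx
    have hu : u = 0 := hBa_sep u fun v => by simpa using hX (0, v, 0)
    subst hu
    have hξ : ξ = 0 := LinearMap.ext fun y => by simpa using hX (y, 0, 0)
    subst hξ
    rfl
  · have hmu_swap : mu x z y = -mu x y z := by
      rw [← hmu_cyc y x z, ← hmu_cyc z y x, hmu z y, LinearMap.neg_apply, hmu_cyc x y z]
    have hφ_skew : φ y u z + φ z u y = 0 := by
      rw [hφ, hφ, hla z y, map_neg, LinearMap.neg_apply]
      ring
    have hξ : ξ ⁅z, y⁆ = -ξ ⁅y, z⁆ := by rw [← lie_skew, map_neg]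
    simp only [standardForm_apply, bracket, coadjoint, LinearMap.add_apply, LinearMap.sub_apply,
      LinearMap.neg_apply, LinearMap.comp_apply, ad_apply, hφ x, hBa_symm v]
    linear_combination hmu_swap - hφ_skew + hξ

end

end AbelianExtension

theorem stmt12_general (F : Type*) [Field F]
    (h : Type*) [LieRing h] [LieAlgebra F h]
    (a : Type*) [AddCommGroup a] [Module F a]
    (Ba : a →ₗ[F] a →ₗ[F] F)
    (hBasym : ∀ u v : a, Ba u v = Ba v u)
    (hBand : ∀ u : a, (∀ v : a, Ba u v = 0) → u = 0)
    (φ : h →ₗ[F] a →ₗ[F] Module.Dual F h)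
    (la : h →ₗ[F] h →ₗ[F] a) (hla : ∀ x y : h, la x y = - la y x)
    (mu : h →ₗ[F] h →ₗ[F] Module.Dual F h) (hmu : ∀ x y : h, mu x y = - mu y x)
    -- `μ` is cyclic
    (hmucyc : ∀ x y z : h, mu x y z = mu y z x)
    -- `λ_φ` is the bilinear map determined by `φ` and `B_a`
    (laφ : h →ₗ[F] h →ₗ[F] a)
    (hlaφ : ∀ (x y : h) (u : a), φ x u y = - Ba (laφ x y) u)
    -- the linear map `L` with (i) `e_φ(L) = 0` and (ii) `λ_φ = λ + d_a(L)`
    (L : h →ₗ[F] a)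
    (hL1 : ∀ x y : h, φ x (L y) - φ y (L x) = 0)
    (hL2 : ∀ x y : h, laφ x y = la x y - L ⁅x, y⁆) :
    -- the bracket of `h(λ, μ, φ, ad_h*)` on `h ⊕ a ⊕ h*`
    let coad : h → Module.Dual F h → Module.Dual F h :=
      fun x ξ => - (ξ ∘ₗ LieAlgebra.ad F h x)
    let br : h × a × Module.Dual F h → h × a × Module.Dual F h →
        h × a × Module.Dual F h :=
      fun p q => (⁅p.1, q.1⁆, la p.1 q.1,
        mu p.1 q.1 + φ p.1 q.2.1 - φ q.1 p.2.1 + coad p.1 q.2.2 - coad q.1 p.2.2)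
    -- there exists an invariant metric
    ∃ Bm : (h × a × Module.Dual F h) →ₗ[F] (h × a × Module.Dual F h) →ₗ[F] F,
      (∀ X Y : h × a × Module.Dual F h, Bm X Y = Bm Y X) ∧
      (∀ X : h × a × Module.Dual F h, (∀ Y, Bm X Y = 0) → X = 0) ∧
      (∀ X Y Z : h × a × Module.Dual F h, Bm (br X Y) Z = - Bm Y (br X Z)) := by
  intro coad br
  have hlaφ_skew : ∀ x y, laφ x y = -laφ y x := fun x y => by
    rw [hL2, hL2, hla, ← lie_skew, map_neg]
    abel
  exact ⟨_, (AbelianExtension.isInvariantMetric_standardForm hBasym hBand hlaφ_skew hmu hmucyc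
    hlaφ).compl₁₂_equiv (AbelianExtension.shear L) (AbelianExtension.shear_bracket hL1 hL2)⟩

/-- if `μ` is cyclic and there is a linear map `L : h → a` with
`e_φ(L) = 0` and `λ_φ = λ + d_a(L)`, then `h(λ, μ, φ, ad_h*)` admits an invariant
metric. -/
theorem stmt12 (F : Type*) [Field F] [CharZero F]
    (h : Type*) [LieRing h] [LieAlgebra F h] [FiniteDimensional F h]
    (a : Type*) [AddCommGroup a] [Module F a] [FiniteDimensional F a]
    (Ba : a →ₗ[F] a →ₗ[F] F)
    (hBasym : ∀ u v : a, Ba u v = Ba v u)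
    (hBand : ∀ u : a, (∀ v : a, Ba u v = 0) → u = 0)
    (φ : h →ₗ[F] a →ₗ[F] Module.Dual F h)
    (hφ : ∀ (x y : h) (u : a) (z : h),
      φ ⁅x, y⁆ u z = - φ y u ⁅x, z⁆ + φ x u ⁅y, z⁆)
    (la : h →ₗ[F] h →ₗ[F] a) (hla : ∀ x y : h, la x y = - la y x)
    (mu : h →ₗ[F] h →ₗ[F] Module.Dual F h) (hmu : ∀ x y : h, mu x y = - mu y x)
    (hcoc1 : ∀ x y z : h, la ⁅x, y⁆ z + la ⁅y, z⁆ x + la ⁅z, x⁆ y = 0)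
    (hcoc2 : ∀ x y z w : h,
      φ x (la y z) w - φ y (la x z) w + φ z (la x y) w
        - mu y z ⁅x, w⁆ + mu x z ⁅y, w⁆ - mu x y ⁅z, w⁆
        - mu ⁅x, y⁆ z w + mu ⁅x, z⁆ y w - mu ⁅y, z⁆ x w = 0)
    -- `μ` is cyclic
    (hmucyc : ∀ x y z : h, mu x y z = mu y z x)
    -- `λ_φ` is the bilinear map determined by `φ` and `B_a`
    (laφ : h →ₗ[F] h →ₗ[F] a)
    (hlaφ : ∀ (x y : h) (u : a), φ x u y = - Ba (laφ x y) u)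
    -- the linear map `L` with (i) `e_φ(L) = 0` and (ii) `λ_φ = λ + d_a(L)`
    (L : h →ₗ[F] a)
    (hL1 : ∀ x y : h, φ x (L y) - φ y (L x) = 0)
    (hL2 : ∀ x y : h, laφ x y = la x y - L ⁅x, y⁆) :
    -- the bracket of `h(λ, μ, φ, ad_h*)` on `h ⊕ a ⊕ h*`
    let coad : h → Module.Dual F h → Module.Dual F h :=
      fun x ξ => - (ξ ∘ₗ LieAlgebra.ad F h x)
    let br : h × a × Module.Dual F h → h × a × Module.Dual F h →
        h × a × Module.Dual F h :=
      fun p q => (⁅p.1, q.1⁆, la p.1 q.1,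
        mu p.1 q.1 + φ p.1 q.2.1 - φ q.1 p.2.1 + coad p.1 q.2.2 - coad q.1 p.2.2)
    -- there exists an invariant metric
    ∃ Bm : (h × a × Module.Dual F h) →ₗ[F] (h × a × Module.Dual F h) →ₗ[F] F,
      (∀ X Y : h × a × Module.Dual F h, Bm X Y = Bm Y X) ∧
      (∀ X : h × a × Module.Dual F h, (∀ Y, Bm X Y = 0) → X = 0) ∧
      (∀ X Y Z : h × a × Module.Dual F h, Bm (br X Y) Z = - Bm Y (br X Z)) :=
  stmt12_general F h a Ba hBasym hBand φ la hla mu hmu hmucyc laφ hlaφ L hL1 hL2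
end
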